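/- Assume [E : F] = 2, that the sequence (d_i)_{i ≥ 2} is not constant (where d_i = dim_F(C_i ∩ L_1)), that D₀ = {i ≥ 2 : d_i = 0} is infinite, and that the differences between consecutive elements of D₀ are bounded with maximum r. Then L is ideally r-constrained but L is not ideally (r−1)-constrained. -/

import Mathlib

open Submodule

/-- The `i`-th two-step centraliser `C_i = {a ∈ M_1 | ⁅a, u⁆ = 0 for all u ∈ M_i}`. -/
def twoStepCentraliser {E : Type*} [Field E] {M : Type*} [LieRing M] [LieAlgebra E M]
    (Mc : ℕ → Submodule E M) (i : ℕ) : Submodule E M where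
  carrier := {a : M | a ∈ Mc 1 ∧ ∀ u ∈ Mc i, ⁅a, u⁆ = 0}
  add_mem' := by
    rintro a b ⟨ha1, ha2⟩ ⟨hb1, hb2⟩
    exact ⟨add_mem ha1 hb1, fun u hu => by rw [add_lie, ha2 u hu, hb2 u hu, add_zero]⟩
  zero_mem' := ⟨zero_mem _, fun u _ => zero_lie u⟩
  smul_mem' := by
    rintro c a ⟨ha1, ha2⟩
    exact ⟨Submodule.smul_mem _ c ha1, fun u hu => by rw [smul_lie, ha2 u hu, smul_zero]⟩

/-- `Mc` is a grading of `M` as a graded Lie algebra of maximal class over `E`,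
generated in degree 1. -/
structure IsMaximalClass (E : Type*) [Field E] (M : Type*) [LieRing M] [LieAlgebra E M]
    (Mc : ℕ → Submodule E M) : Prop where
  zero_bot : Mc 0 = ⊥
  internal : DirectSum.IsInternal Mc
  lie_mem : ∀ i j : ℕ, ∀ x ∈ Mc i, ∀ y ∈ Mc j, ⁅x, y⁆ ∈ Mc (i + j)
  finrank_one : Module.finrank E ↥(Mc 1) = 2
  finrank_eq_one : ∀ i : ℕ, 2 ≤ i → Module.finrank E ↥(Mc i) = 1
  span_succ : ∀ i : ℕ, 1 ≤ i →
    Mc (i + 1) = Submodule.span E {z : M | ∃ v ∈ Mc i, ∃ a ∈ Mc 1, z = ⁅v, a⁆}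

/-- The homogeneous components of the Lie `F`-subalgebra generated by `X` and `Y` in
degree 1:  `L_1 = span_F {X, Y}` and `L_{i+1} = span_F {⁅v, a⁆ : v ∈ L_i, a ∈ L_1}`. -/
def Lcomp (F : Type*) [Field F] {M : Type*} [LieRing M] [Module F M]
    (X Y : M) : ℕ → Submodule F M
  | 0 => ⊥
  | 1 => Submodule.span F {X, Y}
  | (i + 2) => Submodule.span F
      {z : M | ∃ v ∈ Lcomp F X Y (i + 1), ∃ a ∈ Submodule.span F ({X, Y} : Set M), z = ⁅v, a⁆}

/-- `d_i = dim_F (C_i ∩ L_1)`. -/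
noncomputable def dSeq (E : Type*) [Field E] {M : Type*} [LieRing M] [LieAlgebra E M]
    (Mc : ℕ → Submodule E M) (F : Type*) [Field F] [Algebra F E] [LieAlgebra F M]
    [IsScalarTower F E M] (X Y : M) (i : ℕ) : ℕ :=
  Module.finrank F
    ↥(Submodule.restrictScalars F (twoStepCentraliser Mc i) ⊓ Lcomp F X Y 1)

/-- `L^j = ⊕_{i ≥ j} L_i`. -/
def Lpow (F : Type*) [Field F] {M : Type*} [LieRing M] [Module F M]
    (X Y : M) (j : ℕ) : Submodule F M :=
  ⨆ i : ℕ, ⨆ _ : j ≤ i, Lcomp F X Y i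

/-- `I` is a graded ideal of `L`: a Lie ideal of `L` equal to `⊕_{i ≥ 1} (I ∩ L_i)`. -/
def IsGradedIdealL (F : Type*) [Field F] {M : Type*} [LieRing M] [Module F M]
    (X Y : M) (I : Submodule F M) : Prop :=
  (∀ x ∈ (⨆ i : ℕ, Lcomp F X Y i : Submodule F M), ∀ y ∈ I, ⁅x, y⁆ ∈ I) ∧
  I = ⨆ i : ℕ, ⨆ _ : 1 ≤ i, (I ⊓ Lcomp F X Y i)

/-- `L` is ideally `s`-constrained: every nonzero graded ideal `I` of `L` satisfies
`L^i ⊇ I ⊇ L^{i+s}` for some `i ≥ 1`. -/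
def IdeallyConstrained (F : Type*) [Field F] {M : Type*} [LieRing M] [Module F M]
    (X Y : M) (s : ℕ) : Prop :=
  ∀ I : Submodule F M, IsGradedIdealL F X Y I → I ≠ ⊥ →
    ∃ i : ℕ, 1 ≤ i ∧ I ≤ Lpow F X Y i ∧ Lpow F X Y (i + s) ≤ I

/-!
For `k ≥ 2` and `0 ≠ v ∈ M_k` the map `a ↦ ⁅v, a⁆` on `L_1` has kernel `C_k ∩ L_1`, so
`⁅F v, L_1⁆` has `F`-dimension `2 - d_k`; moreover `d_k ≤ 1`. Hence a one-dimensional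
homogeneous `F`-space stays one-dimensional along a run of `d = 1` and becomes all of the
two-dimensional `M_{k+1}` right after a zero of `d`, after which every degree is full.

A nonzero graded ideal `I` with lowest degree `i` therefore contains `L_{max i 2}` when `d` has
no zero below `i` (that component is one-dimensional), and contains everything above a zero of
`d` in `[i, i + r)` otherwise. Conversely, if `m` is a zero followed by `r - 1` ones, the ideal
generated by a nonzero element of `M_{m+1}` is still one-dimensional in degree `m + r`, where
`L` already coincides with `M`; so it is not squeezed between `L^i` and `L^{i+r-1}`.
-/

open Module

namespace Nat

variable {p : ℕ → Prop}

theorem not_of_nth_lt_of_lt_nth (hp : (Set.ofPred p).Infinite) {j k : ℕ}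
    (h₁ : nth p j < k) (h₂ : k < nth p (j + 1)) : ¬ p k := by
  classical
  intro hk
  have hj : j < count p k := (lt_nth_iff_count_lt hp).2 h₁
  have hk' : count p (k + 1) ≤ j + 1 := (count_le_iff_le_nth hp).2 h₂
  have := count_lt_count_succ_iff.2 hk
  omega

theorem exists_mem_Ico_of_nth_sub_le (hp : (Set.ofPred p).Infinite) {r : ℕ}
    (hr : ∀ j, nth p (j + 1) - nth p j ≤ r) {e i : ℕ} (he : p e) (hei : e < i) :
    ∃ n, p n ∧ i ≤ n ∧ n < i + r := by
  classical
  have hpos : 0 < count p i := (count_strict_mono he hei).trans_le' (zero_le _)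
  have hlow : nth p (count p i - 1) < i := nth_lt_of_lt_count (by omega)
  have hup : i ≤ nth p (count p i) := le_nth_count hp i
  have hgap := hr (count p i - 1)
  rw [Nat.sub_add_cancel hpos] at hgap
  exact ⟨_, nth_mem_of_infinite hp _, hup, by omega⟩

end Nat

theorem lie_mem_span_lie_of_mem_span_pair {R L : Type*} [CommRing R] [LieRing L]
    [LieAlgebra R L] {X Y v a : L} (hv : v ∈ span R {X, Y}) (ha : a ∈ span R {X, Y}) :
    ⁅v, a⁆ ∈ span R {⁅X, Y⁆} := by
  obtain ⟨c₁, c₂, rfl⟩ := mem_span_pair.1 hv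
  obtain ⟨c₃, c₄, rfl⟩ := mem_span_pair.1 ha
  have expand : ⁅c₁ • X + c₂ • Y, c₃ • X + c₄ • Y⁆ = (c₁ * c₄ - c₂ * c₃) • ⁅X, Y⁆ := by
    simp only [lie_add, add_lie, lie_smul, smul_lie, lie_self, smul_zero,
      ← lie_skew X Y]
    module
  rw [expand]
  exact smul_mem _ _ (mem_span_singleton_self _)

theorem span_singleton_le_of_inf_ne_bot {K V : Type*} [Field K] [AddCommGroup V] [Module K V]
    {I : Submodule K V} {v : V} (h : I ⊓ span K {v} ≠ ⊥) : span K {v} ≤ I := by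
  obtain ⟨w, hw, hw0⟩ := exists_mem_ne_zero_of_ne_bot h
  obtain ⟨c, rfl⟩ := mem_span_singleton.1 (mem_inf.1 hw).2
  have hc : c ≠ 0 := by rintro rfl; simp at hw0
  rw [span_singleton_le_iff_mem, ← inv_smul_smul₀ hc v]
  exact smul_mem _ _ (mem_inf.1 hw).1

/-- `⁅p, L_1⁆`. -/
def lieL1 (F : Type*) [Field F] {M : Type*} [LieRing M] [Module F M] (X Y : M)
    (p : Submodule F M) : Submodule F M :=
  span F {z : M | ∃ v ∈ p, ∃ a ∈ span F ({X, Y} : Set M), z = ⁅v, a⁆}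

/-- The degree-`k` component of the ideal of `L` generated by an element `w` of degree `n`. -/
def idealComponent (F : Type*) [Field F] {M : Type*} [LieRing M] [Module F M] (X Y : M)
    (n : ℕ) (w : M) (k : ℕ) : Submodule F M :=
  if n ≤ k then (lieL1 F X Y)^[k - n] (span F {w}) else ⊥

section GeneratedSubalgebra

variable {F M : Type*} [Field F] [LieRing M] [LieAlgebra F M] {X Y : M}

theorem lie_mem_lieL1 {p : Submodule F M} {v a : M} (hv : v ∈ p) (ha : a ∈ Lcomp F X Y 1) :
    ⁅v, a⁆ ∈ lieL1 F X Y p :=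
  subset_span ⟨v, hv, a, ha, rfl⟩

theorem lieL1_mono : Monotone (lieL1 F X Y) := fun _ _ hpq =>
  span_mono fun _ ⟨v, hv, a, ha, hz⟩ => ⟨v, hpq hv, a, ha, hz⟩

theorem lieL1_bot : lieL1 F X Y ⊥ = ⊥ := by
  refine eq_bot_iff.2 (span_le.2 ?_)
  rintro _ ⟨v, hv, a, -, rfl⟩
  rw [(mem_bot F).1 hv, zero_lie]
  exact zero_mem _

theorem lieL1_span_singleton (v : M) :
    lieL1 F X Y (span F {v}) = (Lcomp F X Y 1).map (LieAlgebra.ad F M v) := by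
  apply le_antisymm
  · refine span_le.2 ?_
    rintro _ ⟨x, hx, a, ha, rfl⟩
    obtain ⟨c, rfl⟩ := mem_span_singleton.1 hx
    exact ⟨c • a, smul_mem _ c ha, by simp [smul_lie]⟩
  · rintro _ ⟨a, ha, rfl⟩
    exact lie_mem_lieL1 (mem_span_singleton_self v) ha

theorem X_mem_Lcomp_one : X ∈ Lcomp F X Y 1 := subset_span (Set.mem_insert _ _)

theorem Y_mem_Lcomp_one : Y ∈ Lcomp F X Y 1 := subset_span (Set.mem_insert_of_mem _ rfl)

theorem Lcomp_succ {k : ℕ} (hk : 1 ≤ k) : Lcomp F X Y (k + 1) = lieL1 F X Y (Lcomp F X Y k) := by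
  obtain ⟨k, rfl⟩ := Nat.exists_eq_add_of_le' hk
  rfl

theorem Lcomp_two : Lcomp F X Y 2 = span F {⁅X, Y⁆} := by
  refine le_antisymm (span_le.2 ?_) ((span_singleton_le_iff_mem _ _).2 ?_)
  · rintro _ ⟨v, hv, a, ha, rfl⟩
    exact lie_mem_span_lie_of_mem_span_pair hv ha
  · exact lie_mem_lieL1 X_mem_Lcomp_one Y_mem_Lcomp_one

theorem Lcomp_add {k : ℕ} (hk : 1 ≤ k) (t : ℕ) :
    Lcomp F X Y (k + t) = (lieL1 F X Y)^[t] (Lcomp F X Y k) := by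
  induction t with
  | zero => rfl
  | succ t ih => rw [Function.iterate_succ_apply', ← ih, ← Lcomp_succ (by omega)]; rfl

theorem Lcomp_le_Lpow {j k : ℕ} (h : j ≤ k) : Lcomp F X Y k ≤ Lpow F X Y j :=
  le_iSup₂ (f := fun i (_ : j ≤ i) => Lcomp F X Y i) k h

theorem Lpow_antitone : Antitone (Lpow F X Y) := fun _ _ h =>
  iSup₂_le fun _ hk => Lcomp_le_Lpow (h.trans hk)

theorem Lpow_le_of_Lcomp_le {I : Submodule F M} (hI : lieL1 F X Y I ≤ I) {k : ℕ} (hk : 1 ≤ k)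
    (h : Lcomp F X Y k ≤ I) : Lpow F X Y k ≤ I := by
  refine iSup₂_le fun l hl => ?_
  induction l, hl using Nat.le_induction with
  | base => exact h
  | succ l hl ih => exact (Lcomp_succ (hk.trans hl)).trans_le ((lieL1_mono ih).trans hI)

namespace IsGradedIdealL

variable {I : Submodule F M} (hI : IsGradedIdealL F X Y I)
include hI

theorem lieL1_le : lieL1 F X Y I ≤ I := by
  refine span_le.2 ?_
  rintro _ ⟨v, hv, a, ha, rfl⟩
  rw [← lie_skew]
  exact neg_mem (hI.1 a (le_iSup (Lcomp F X Y) 1 ha) v hv)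

theorem exists_le_Lpow (hI0 : I ≠ ⊥) :
    ∃ i, 1 ≤ i ∧ I ⊓ Lcomp F X Y i ≠ ⊥ ∧ I ≤ Lpow F X Y i := by
  classical
  have hex : ∃ k, 1 ≤ k ∧ I ⊓ Lcomp F X Y k ≠ ⊥ := by
    by_contra! h
    refine hI0 (eq_bot_iff.2 ?_)
    rw [hI.2]
    exact iSup₂_le fun k hk => (h k hk).le
  obtain ⟨i, ⟨hi1, hi⟩, hmin⟩ : ∃ i, (1 ≤ i ∧ I ⊓ Lcomp F X Y i ≠ ⊥) ∧
      ∀ k < i, ¬(1 ≤ k ∧ I ⊓ Lcomp F X Y k ≠ ⊥) :=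
    ⟨Nat.find hex, Nat.find_spec hex, fun _ => Nat.find_min hex⟩
  refine ⟨i, hi1, hi, ?_⟩
  rw [hI.2]
  refine iSup₂_le fun k hk => ?_
  rcases lt_or_ge k i with hlt | hge
  · exact (not_not.1 fun h => hmin k hlt ⟨hk, h⟩).le.trans bot_le
  · exact inf_le_right.trans (Lcomp_le_Lpow hge)

end IsGradedIdealL

section GradedIdealOfComponents

variable {J : ℕ → Submodule F M} (hJ : ∀ k, lieL1 F X Y (J k) ≤ J (k + 1))
include hJ

theorem lie_mem_of_lieL1_le {k p : ℕ} {x y : M} (hx : x ∈ Lcomp F X Y p) (hy : y ∈ J k) :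
    ⁅x, y⁆ ∈ J (k + p) := by
  have base : ∀ {k a y}, a ∈ Lcomp F X Y 1 → y ∈ J k → ⁅a, y⁆ ∈ J (k + 1) := fun ha hy => by
    rw [← lie_skew]
    exact neg_mem (hJ _ (lie_mem_lieL1 hy ha))
  rcases Nat.eq_zero_or_pos p with rfl | hp
  · rw [(mem_bot F).1 hx, zero_lie]
    exact zero_mem _
  induction p, hp using Nat.le_induction generalizing k x y with
  | base => exact base hx hy
  | succ p hp ih =>
    rw [Lcomp_succ hp] at hx
    induction hx using span_induction with
    | mem z hz =>
      obtain ⟨v, hv, a, ha, rfl⟩ := hz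
      rw [lie_lie]
      refine sub_mem ?_ (base ha (ih hv hy))
      convert ih hv (base ha hy) using 2
      omega
    | zero => rw [zero_lie]; exact zero_mem _
    | add _ _ _ _ h₁ h₂ => rw [add_lie]; exact add_mem h₁ h₂
    | smul c _ _ h => rw [smul_lie]; exact smul_mem _ c h

theorem isGradedIdealL_iSup (hJL : ∀ k, J k ≤ Lcomp F X Y k) :
    IsGradedIdealL F X Y (⨆ k, J k) := by
  refine ⟨fun x hx y hy => ?_, le_antisymm (iSup_le fun k => ?_) (iSup₂_le fun _ _ => inf_le_left)⟩
  · induction hy using iSup_induction' with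
    | mem k y hy =>
      induction hx using iSup_induction' with
      | mem p x hx => exact le_iSup J (k + p) (lie_mem_of_lieL1_le hJ hx hy)
      | zero => rw [zero_lie]; exact zero_mem _
      | add _ _ _ _ h₁ h₂ => rw [add_lie]; exact add_mem h₁ h₂
    | zero => rw [lie_zero]; exact zero_mem _
    | add _ _ _ _ h₁ h₂ => rw [lie_add]; exact add_mem h₁ h₂
  · rcases Nat.eq_zero_or_pos k with rfl | hk
    · exact (hJL 0).trans bot_le
    · exact (le_inf (le_iSup J k) (hJL k)).trans
        (le_iSup₂ (f := fun k (_ : 1 ≤ k) => (⨆ k, J k) ⊓ Lcomp F X Y k) k hk)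

end GradedIdealOfComponents

theorem idealComponent_add (n : ℕ) (w : M) (t : ℕ) :
    idealComponent F X Y n w (n + t) = (lieL1 F X Y)^[t] (span F {w}) := by
  simp [idealComponent]

theorem lieL1_idealComponent_le (n : ℕ) (w : M) (k : ℕ) :
    lieL1 F X Y (idealComponent F X Y n w k) ≤ idealComponent F X Y n w (k + 1) := by
  by_cases hk : n ≤ k
  · simp only [idealComponent, if_pos hk, if_pos (Nat.le_succ_of_le hk), Nat.sub_add_comm hk,
      Function.iterate_succ_apply', le_refl]
  · simp only [idealComponent, if_neg hk, lieL1_bot, bot_le]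

theorem idealComponent_le_Lcomp {n : ℕ} (hn : 1 ≤ n) {w : M} (hw : w ∈ Lcomp F X Y n) (k : ℕ) :
    idealComponent F X Y n w k ≤ Lcomp F X Y k := by
  by_cases hk : n ≤ k
  · obtain ⟨t, rfl⟩ := Nat.exists_eq_add_of_le hk
    rw [idealComponent_add, Lcomp_add hn]
    exact lieL1_mono.iterate _ ((span_singleton_le_iff_mem _ _).2 hw)
  · simp only [idealComponent, if_neg hk, bot_le]

end GeneratedSubalgebra

namespace IsMaximalClass

variable {E M : Type*} [Field E] [LieRing M] [LieAlgebra E M] {Mc : ℕ → Submodule E M}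
  (hM : IsMaximalClass E M Mc)
include hM

theorem finiteDimensional (i : ℕ) : FiniteDimensional E (Mc i) := by
  match i with
  | 0 => rw [hM.zero_bot]; infer_instance
  | 1 => exact .of_finrank_eq_succ hM.finrank_one
  | i + 2 => exact .of_finrank_eq_succ (hM.finrank_eq_one _ (by omega))

theorem ne_bot {i : ℕ} (hi : 2 ≤ i) : Mc i ≠ ⊥ := by
  intro h
  have := hM.finrank_eq_one i hi
  rw [h, finrank_bot] at this
  omega

theorem eq_span_singleton {i : ℕ} (hi : 2 ≤ i) {v : M} (hv : v ∈ Mc i) (hv0 : v ≠ 0) :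
    Mc i = span E {v} := by
  have := hM.finiteDimensional i
  refine (eq_of_le_of_finrank_le ((span_singleton_le_iff_mem _ _).2 hv) ?_).symm
  rw [hM.finrank_eq_one i hi, finrank_span_singleton hv0]

theorem eq_span_pair {X Y : M} (hX : X ∈ Mc 1) (hY : Y ∈ Mc 1)
    (hXY : LinearIndependent E ![X, Y]) : Mc 1 = span E {X, Y} := by
  have := hM.finiteDimensional 1
  refine (eq_of_le_of_finrank_le (span_le.2 ?_) ?_).symm
  · rintro _ (rfl | rfl)
    exacts [hX, hY]
  · rw [hM.finrank_one, ← Matrix.range_cons_cons_empty, finrank_span_eq_card hXY,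
      Fintype.card_fin]

variable {X Y : M} (hgen : Mc 1 = span E {X, Y})
include hgen

theorem lie_ne_zero : ⁅X, Y⁆ ≠ 0 := by
  intro h
  refine hM.ne_bot le_rfl (eq_bot_iff.2 ?_)
  rw [hM.span_succ 1 le_rfl, span_le]
  rintro _ ⟨v, hv, a, ha, rfl⟩
  rw [hgen] at hv ha
  simpa [h] using lie_mem_span_lie_of_mem_span_pair hv ha

theorem exists_lie_ne_zero {k : ℕ} (hk : 1 ≤ k) {v : M} (hv : v ∈ Mc k) (hv0 : v ≠ 0) :
    ∃ a ∈ ({X, Y} : Set M), ⁅v, a⁆ ≠ 0 := by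
  by_contra! h
  have hvX := h X (Set.mem_insert _ _)
  have hvY := h Y (Set.mem_insert_of_mem _ rfl)
  rcases hk.eq_or_lt with rfl | hk
  · rw [hgen] at hv
    obtain ⟨c₁, c₂, rfl⟩ := mem_span_pair.1 hv
    have hXY := hM.lie_ne_zero hgen
    simp only [add_lie, smul_lie, lie_self, smul_zero, zero_add, add_zero] at hvX hvY
    rw [← lie_skew, smul_neg, neg_eq_zero, smul_eq_zero] at hvX
    rw [smul_eq_zero] at hvY
    simp [hvX.resolve_right hXY, hvY.resolve_right hXY] at hv0
  · refine hM.ne_bot (i := k + 1) (by omega) (eq_bot_iff.2 ?_)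
    rw [hM.span_succ k (by omega), span_le]
    rintro _ ⟨u, hu, a, ha, rfl⟩
    rw [hM.eq_span_singleton hk hv hv0] at hu
    rw [hgen] at ha
    obtain ⟨c, rfl⟩ := mem_span_singleton.1 hu
    obtain ⟨c₁, c₂, rfl⟩ := mem_span_pair.1 ha
    simp [lie_add, lie_smul, smul_lie, hvX, hvY]

end IsMaximalClass

section Restriction

variable {E M : Type*} [Field E] [LieRing M] [LieAlgebra E M] {Mc : ℕ → Submodule E M}
  {F : Type*} [Field F] [Algebra F E] [LieAlgebra F M] [IsScalarTower F E M] {X Y : M}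

theorem mem_twoStepCentraliser {i : ℕ} {a : M} :
    a ∈ twoStepCentraliser Mc i ↔ a ∈ Mc 1 ∧ ∀ u ∈ Mc i, ⁅a, u⁆ = 0 :=
  Iff.rfl

instance finiteDimensional_Lcomp_one : FiniteDimensional F (Lcomp F X Y 1) :=
  FiniteDimensional.span_of_finite F (Set.toFinite _)

theorem finrank_Lcomp_one (hXY : LinearIndependent E ![X, Y]) : finrank F (Lcomp F X Y 1) = 2 := by
  rw [Lcomp, ← Matrix.range_cons_cons_empty, finrank_span_eq_card (hXY.restrict_scalars' F),
    Fintype.card_fin]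

namespace IsMaximalClass

variable (hM : IsMaximalClass E M Mc)
include hM

theorem finiteDimensional_restrictScalars (hEF : finrank F E = 2) (i : ℕ) :
    FiniteDimensional F ((Mc i).restrictScalars F) := by
  have : Module.Finite F E := Module.finite_of_finrank_eq_succ hEF
  have := hM.finiteDimensional i
  have : Module.Finite F (Mc i) := Module.Finite.trans E (Mc i)
  exact Module.Finite.equiv ((restrictScalarsEquiv F E M (Mc i)).restrictScalars F).symm

theorem finrank_restrictScalars (hEF : finrank F E = 2) {i : ℕ} (hi : 2 ≤ i) :
    finrank F ((Mc i).restrictScalars F) = 2 := by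
  have : Module.Finite F E := Module.finite_of_finrank_eq_succ hEF
  have := hM.finiteDimensional i
  rw [((restrictScalarsEquiv F E M (Mc i)).restrictScalars F).finrank_eq,
    ← finrank_mul_finrank F E (Mc i), hM.finrank_eq_one i hi, hEF]

theorem mem_of_mem_iSup {J : ℕ → Submodule F M} (hJ : ∀ k, J k ≤ (Mc k).restrictScalars F)
    {n : ℕ} {x : M} (hx : x ∈ ⨆ k, J k) (hxn : x ∈ Mc n) : x ∈ J n := by
  rw [iSup_split_single J n] at hx
  obtain ⟨y, hy, z, hz, rfl⟩ := mem_sup.1 hx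
  have hzn : z ∈ Mc n := by simpa using sub_mem hxn (hJ n hy)
  have hle : ⨆ (k) (_ : k ≠ n), J k ≤ (⨆ (k) (_ : k ≠ n), Mc k).restrictScalars F :=
    iSup₂_le fun k hk => (hJ k).trans <|
      restrictScalars_mono F (le_iSup₂ (f := fun k (_ : k ≠ n) => Mc k) k hk)
  have hz0 : z = 0 := (mem_bot E).1 <|
    (hM.internal.submodule_iSupIndep n).le_bot ⟨hzn, hle hz⟩
  simpa [hz0] using hy

variable (hgen : Mc 1 = span E {X, Y})
include hgen

theorem lieL1_le_restrictScalars_succ {k : ℕ} {p : Submodule F M}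
    (hp : p ≤ (Mc k).restrictScalars F) : lieL1 F X Y p ≤ (Mc (k + 1)).restrictScalars F := by
  refine span_le.2 ?_
  rintro _ ⟨v, hv, a, ha, rfl⟩
  refine hM.lie_mem k 1 v (hp hv) a ?_
  rw [hgen]
  exact span_le_restrictScalars F E _ ha

theorem Lcomp_le_restrictScalars (k : ℕ) : Lcomp F X Y k ≤ (Mc k).restrictScalars F := by
  rcases Nat.eq_zero_or_pos k with rfl | hk
  · exact bot_le
  induction k, hk using Nat.le_induction with
  | base => exact hgen ▸ span_le_restrictScalars F E _
  | succ k hk ih => exact (Lcomp_succ hk).trans_le (hM.lieL1_le_restrictScalars_succ hgen ih)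

theorem eq_zero_of_mem_Lpow {n : ℕ} {x : M} (hxn : x ∈ Mc n) (hx : x ∈ Lpow F X Y (n + 1)) :
    x = 0 := by
  have := hM.mem_of_mem_iSup (J := fun k => ⨆ (_ : n + 1 ≤ k), Lcomp F X Y k)
    (fun k => iSup_le fun _ => hM.Lcomp_le_restrictScalars hgen k) hx hxn
  simpa using this

theorem ker_ad_domRestrict {k : ℕ} (hk : 2 ≤ k) {v : M} (hv : v ∈ Mc k) (hv0 : v ≠ 0) :
    LinearMap.ker ((LieAlgebra.ad F M v).domRestrict (Lcomp F X Y 1)) =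
      ((twoStepCentraliser Mc k).restrictScalars F ⊓ Lcomp F X Y 1).comap
        (Lcomp F X Y 1).subtype := by
  ext ⟨a, ha⟩
  have haM : a ∈ Mc 1 := hgen ▸ span_le_restrictScalars F E _ ha
  simp only [LinearMap.mem_ker, LinearMap.domRestrict_apply, LieAlgebra.ad_apply, mem_comap,
    subtype_apply, mem_inf, restrictScalars_mem, mem_twoStepCentraliser, haM, ha, true_and,
    and_true, hM.eq_span_singleton hk hv hv0, mem_span_singleton]
  constructor
  · rintro h _ ⟨c, rfl⟩
    rw [lie_smul, ← lie_skew, h, neg_zero, smul_zero]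
  · intro h
    rw [← lie_skew, h v ⟨1, one_smul E v⟩, neg_zero]

theorem finrank_lieL1_span_singleton_add_dSeq (hXY : LinearIndependent E ![X, Y]) {k : ℕ}
    (hk : 2 ≤ k) {v : M} (hv : v ∈ Mc k) (hv0 : v ≠ 0) :
    finrank F (lieL1 F X Y (span F {v})) + dSeq E Mc F X Y k = 2 := by
  have h := ((LieAlgebra.ad F M v).domRestrict (Lcomp F X Y 1)).finrank_range_add_finrank_ker
  rwa [LinearMap.range_domRestrict, ← lieL1_span_singleton, hM.ker_ad_domRestrict hgen hk hv hv0,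
    (comapSubtypeEquivOfLe inf_le_right).finrank_eq, finrank_Lcomp_one hXY] at h

theorem lieL1_ne_bot {k : ℕ} (hk : 1 ≤ k) {p : Submodule F M} (hp : p ≤ (Mc k).restrictScalars F)
    (hp0 : p ≠ ⊥) : lieL1 F X Y p ≠ ⊥ := by
  obtain ⟨v, hv, hv0⟩ := exists_mem_ne_zero_of_ne_bot hp0
  obtain ⟨a, ha, hva⟩ := hM.exists_lie_ne_zero hgen hk (hp hv) hv0
  exact fun h => hva ((mem_bot F).1 (h ▸ lie_mem_lieL1 hv (subset_span ha)))

theorem dSeq_le_one (hXY : LinearIndependent E ![X, Y]) {k : ℕ} (hk : 2 ≤ k) :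
    dSeq E Mc F X Y k ≤ 1 := by
  obtain ⟨v, hv, hv0⟩ := exists_mem_ne_zero_of_ne_bot (hM.ne_bot hk)
  have hne : lieL1 F X Y (span F {v}) ≠ ⊥ :=
    hM.lieL1_ne_bot (F := F) hgen (by omega) ((span_singleton_le_iff_mem _ _).2 hv)
      (by simpa using hv0)
  rw [lieL1_span_singleton] at hne
  have h := hM.finrank_lieL1_span_singleton_add_dSeq (F := F) hgen hXY hk hv hv0
  rw [lieL1_span_singleton] at h
  have := one_le_finrank_iff.2 hne
  omega

theorem restrictScalars_succ_le_lieL1_of_dSeq_eq_zero (hXY : LinearIndependent E ![X, Y])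
    (hEF : finrank F E = 2) {k : ℕ} (hk : 2 ≤ k) (hd : dSeq E Mc F X Y k = 0) {p : Submodule F M}
    (hp : p ≤ (Mc k).restrictScalars F) (hp0 : p ≠ ⊥) :
    (Mc (k + 1)).restrictScalars F ≤ lieL1 F X Y p := by
  obtain ⟨v, hv, hv0⟩ := exists_mem_ne_zero_of_ne_bot hp0
  have hvp : span F {v} ≤ p := (span_singleton_le_iff_mem _ _).2 hv
  have := hM.finiteDimensional_restrictScalars hEF (k + 1)
  have heq := eq_of_le_of_finrank_le (hM.lieL1_le_restrictScalars_succ hgen (hvp.trans hp)) <| by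
    rw [hM.finrank_restrictScalars hEF (by omega),
      ← hM.finrank_lieL1_span_singleton_add_dSeq (F := F) hgen hXY hk (hp hv) hv0, hd,
      add_zero]
  exact heq.symm.le.trans (lieL1_mono hvp)

theorem exists_lieL1_span_singleton_eq (hXY : LinearIndependent E ![X, Y]) {k : ℕ} (hk : 2 ≤ k)
    (hd : dSeq E Mc F X Y k = 1) {v : M} (hv : v ∈ Mc k) (hv0 : v ≠ 0) :
    ∃ w ∈ Mc (k + 1), w ≠ 0 ∧ lieL1 F X Y (span F {v}) = span F {w} := by
  have h := hM.finrank_lieL1_span_singleton_add_dSeq (F := F) hgen hXY hk hv hv0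
  rw [hd] at h
  rw [lieL1_span_singleton] at h ⊢
  obtain ⟨⟨w, hw⟩⟩ :=
    (finrank_le_one_iff_isPrincipal ((Lcomp F X Y 1).map (LieAlgebra.ad F M v))).1 (by omega)
  have hw0 : w ≠ 0 := by
    rintro rfl
    rw [hw, span_zero_singleton, finrank_bot] at h
    omega
  have hwmem : w ∈ (Lcomp F X Y 1).map (LieAlgebra.ad F M v) := hw ▸ mem_span_singleton_self w
  rw [← lieL1_span_singleton] at hwmem
  exact ⟨w, hM.lieL1_le_restrictScalars_succ (F := F) hgen
    ((span_singleton_le_iff_mem _ _).2 hv) hwmem, hw0, hw⟩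

theorem exists_iterate_lieL1_eq_span_singleton (hXY : LinearIndependent E ![X, Y]) {s : ℕ}
    (hs : 2 ≤ s) {v : M} (hv : v ∈ Mc s) (hv0 : v ≠ 0) (t : ℕ)
    (hd : ∀ i < t, dSeq E Mc F X Y (s + i) = 1) :
    ∃ w ∈ Mc (s + t), w ≠ 0 ∧ (lieL1 F X Y)^[t] (span F {v}) = span F {w} := by
  induction t with
  | zero => exact ⟨v, hv, hv0, rfl⟩
  | succ t ih =>
    obtain ⟨u, hu, hu0, hut⟩ := ih fun i hi => hd i (by omega)
    rw [Function.iterate_succ_apply', hut]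
    exact hM.exists_lieL1_span_singleton_eq hgen hXY (by omega) (hd t (by omega)) hu hu0

theorem exists_Lcomp_eq_span_singleton (hXY : LinearIndependent E ![X, Y]) {k : ℕ} (hk : 2 ≤ k)
    (hd : ∀ i, 2 ≤ i → i < k → dSeq E Mc F X Y i = 1) :
    ∃ v, Lcomp F X Y k = span F {v} := by
  obtain ⟨t, rfl⟩ := Nat.exists_eq_add_of_le hk
  have hXYmem : ⁅X, Y⁆ ∈ Mc 2 := hM.lie_mem 1 1 X (hgen ▸ subset_span (Set.mem_insert _ _)) Y
    (hgen ▸ subset_span (Set.mem_insert_of_mem _ rfl))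
  obtain ⟨w, -, -, hw⟩ := hM.exists_iterate_lieL1_eq_span_singleton hgen hXY le_rfl hXYmem
    (hM.lie_ne_zero hgen) t fun i hi => hd (2 + i) (by omega) (by omega)
  exact ⟨w, by rw [Lcomp_add (by omega), Lcomp_two, hw]⟩

theorem restrictScalars_succ_le_lieL1 {k : ℕ} (hk : 2 ≤ k) {p : Submodule F M}
    (h : (Mc k).restrictScalars F ≤ p) : (Mc (k + 1)).restrictScalars F ≤ lieL1 F X Y p := by
  obtain ⟨v, hv, hv0⟩ := exists_mem_ne_zero_of_ne_bot (hM.ne_bot hk)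
  obtain ⟨a, ha, hva⟩ := hM.exists_lie_ne_zero hgen (by omega) hv hv0
  have haM : a ∈ Mc 1 := hgen ▸ subset_span ha
  intro x hx
  rw [restrictScalars_mem, hM.eq_span_singleton (by omega) (hM.lie_mem k 1 v hv a haM) hva] at hx
  obtain ⟨c, rfl⟩ := mem_span_singleton.1 hx
  rw [← smul_lie]
  exact lie_mem_lieL1 (h (smul_mem _ c hv)) (subset_span ha)

theorem inf_Lcomp_ne_bot {p : Submodule F M} (hp : lieL1 F X Y p ≤ p) {i k : ℕ} (hi : 1 ≤ i)
    (hik : i ≤ k) (h : p ⊓ Lcomp F X Y i ≠ ⊥) : p ⊓ Lcomp F X Y k ≠ ⊥ := by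
  induction k, hik using Nat.le_induction with
  | base => exact h
  | succ k hik ih =>
    refine ne_bot_of_le_ne_bot (hM.lieL1_ne_bot hgen (hi.trans hik)
      (inf_le_right.trans (hM.Lcomp_le_restrictScalars hgen k)) ih) ?_
    rw [Lcomp_succ (hi.trans hik)]
    exact le_inf ((lieL1_mono inf_le_left).trans hp) (lieL1_mono inf_le_right)

theorem Lcomp_ne_bot {k : ℕ} (hk : 1 ≤ k) : Lcomp F X Y k ≠ ⊥ := by
  have hX : X ≠ 0 := fun h => hM.lie_ne_zero hgen (by rw [h, zero_lie])
  simpa using hM.inf_Lcomp_ne_bot hgen (p := ⊤) le_top le_rfl hk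
    (by simpa using (Submodule.ne_bot_iff _).2 ⟨X, X_mem_Lcomp_one, hX⟩)

theorem restrictScalars_le_Lcomp (hXY : LinearIndependent E ![X, Y]) (hEF : finrank F E = 2)
    {m : ℕ} (hm : 2 ≤ m) (hd : dSeq E Mc F X Y m = 0) {k : ℕ} (hk : m < k) :
    (Mc k).restrictScalars F ≤ Lcomp F X Y k := by
  induction k, hk using Nat.le_induction with
  | base =>
    rw [Lcomp_succ (by omega)]
    exact hM.restrictScalars_succ_le_lieL1_of_dSeq_eq_zero hgen hXY hEF hm hd
      (hM.Lcomp_le_restrictScalars hgen m) (hM.Lcomp_ne_bot hgen (by omega))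
  | succ k hk ih =>
    rw [Lcomp_succ (by omega)]
    exact hM.restrictScalars_succ_le_lieL1 hgen (by omega) ih

theorem ideallyConstrained (hXY : LinearIndependent E ![X, Y]) (hEF : finrank F E = 2) {r : ℕ}
    (hr : 1 ≤ r) (hgap : ∀ e i, 2 ≤ e → dSeq E Mc F X Y e = 0 → e < i →
      ∃ n, 2 ≤ n ∧ dSeq E Mc F X Y n = 0 ∧ i ≤ n ∧ n < i + r) :
    IdeallyConstrained F X Y r := by
  intro I hI hI0
  obtain ⟨i, hi1, hIi, hIle⟩ := hI.exists_le_Lpow hI0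
  refine ⟨i, hi1, hIle, ?_⟩
  by_cases hzero : ∃ e, 2 ≤ e ∧ dSeq E Mc F X Y e = 0 ∧ e < i
  · obtain ⟨e, he2, hde, hei⟩ := hzero
    obtain ⟨n, hn2, hdn, hin, hni⟩ := hgap e i he2 hde hei
    have hMn : (Mc (n + 1)).restrictScalars F ≤ I :=
      (hM.restrictScalars_succ_le_lieL1_of_dSeq_eq_zero hgen hXY hEF hn2 hdn
        (inf_le_right.trans (hM.Lcomp_le_restrictScalars hgen n))
        (hM.inf_Lcomp_ne_bot hgen hI.lieL1_le hi1 hin hIi)).trans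
        ((lieL1_mono inf_le_left).trans hI.lieL1_le)
    exact (Lpow_antitone (by omega)).trans <| Lpow_le_of_Lcomp_le hI.lieL1_le (by omega)
      ((hM.Lcomp_le_restrictScalars hgen _).trans hMn)
  · push Not at hzero
    obtain ⟨v, hv⟩ := hM.exists_Lcomp_eq_span_singleton hgen hXY (le_max_right i 2)
      fun t ht2 ht => le_antisymm (hM.dSeq_le_one hgen hXY ht2)
        (Nat.one_le_iff_ne_zero.2 fun h => by have := hzero t ht2 h; omega)
    have hIv := hM.inf_Lcomp_ne_bot hgen hI.lieL1_le hi1 (le_max_left i 2) hIi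
    rw [hv] at hIv
    exact (Lpow_antitone (by omega)).trans <| Lpow_le_of_Lcomp_le hI.lieL1_le (by omega)
      (hv ▸ span_singleton_le_of_inf_ne_bot hIv)

theorem not_ideallyConstrained (hXY : LinearIndependent E ![X, Y]) (hEF : finrank F E = 2)
    {m s : ℕ} (hm : 2 ≤ m) (hdm : dSeq E Mc F X Y m = 0)
    (hd : ∀ t < s, dSeq E Mc F X Y (m + 1 + t) = 1) :
    ¬ IdeallyConstrained F X Y s := by
  intro hcon
  obtain ⟨w, hw, hw0⟩ := exists_mem_ne_zero_of_ne_bot (hM.ne_bot (i := m + 1) (by omega))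
  have hwL : w ∈ Lcomp F X Y (m + 1) :=
    hM.restrictScalars_le_Lcomp hgen hXY hEF hm hdm (Nat.lt_succ_self m) hw
  have hJL : ∀ k, idealComponent F X Y (m + 1) w k ≤ Lcomp F X Y k :=
    idealComponent_le_Lcomp (by omega) hwL
  have hwI : w ∈ ⨆ k, idealComponent F X Y (m + 1) w k :=
    le_iSup (idealComponent F X Y (m + 1) w) (m + 1 + 0)
      (by rw [idealComponent_add]; exact mem_span_singleton_self w)
  obtain ⟨i, -, hIle, hIge⟩ := hcon _ (isGradedIdealL_iSup (lieL1_idealComponent_le _ w) hJL)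
    ((Submodule.ne_bot_iff _).2 ⟨w, hwI, hw0⟩)
  have him : i ≤ m + 1 := by
    by_contra! h
    exact hw0 (hM.eq_zero_of_mem_Lpow hgen hw (Lpow_antitone (by omega) (hIle hwI)))
  obtain ⟨v, -, hv0, hv⟩ :=
    hM.exists_iterate_lieL1_eq_span_singleton hgen hXY (by omega) hw hw0 s hd
  have hle : (Mc (m + 1 + s)).restrictScalars F ≤ span F {v} := fun x hx => by
    have hxI := hIge (Lcomp_le_Lpow (by omega)
      (hM.restrictScalars_le_Lcomp hgen hXY hEF hm hdm (by omega) hx))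
    have := hM.mem_of_mem_iSup (fun k => (hJL k).trans (hM.Lcomp_le_restrictScalars hgen k)) hxI hx
    rwa [idealComponent_add, hv] at this
  have := finrank_mono hle
  rw [hM.finrank_restrictScalars hEF (by omega), finrank_span_singleton hv0] at this
  omega

end IsMaximalClass

end Restriction

theorem stmt_13_general (E : Type*) [Field E] (M : Type*) [LieRing M] [LieAlgebra E M]
    (Mc : ℕ → Submodule E M) (hM : IsMaximalClass E M Mc)
    (F : Type*) [Field F] [Algebra F E] [LieAlgebra F M] [IsScalarTower F E M]
    (hEF : Module.finrank F E = 2)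
    (X Y : M) (hX : X ∈ Mc 1) (hY : Y ∈ Mc 1) (hXY : LinearIndependent E ![X, Y])
    (D₀ : ℕ → Prop) (hD₀ : ∀ i, D₀ i ↔ 2 ≤ i ∧ dSeq E Mc F X Y i = 0)
    (hinf : (setOf D₀).Infinite)
    (r : ℕ) (hrub : ∀ j : ℕ, Nat.nth D₀ (j + 1) - Nat.nth D₀ j ≤ r)
    (hrmax : ∃ j : ℕ, Nat.nth D₀ (j + 1) - Nat.nth D₀ j = r) :
    IdeallyConstrained F X Y r ∧ ¬ IdeallyConstrained F X Y (r - 1) := by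
  have hgen := hM.eq_span_pair hX hY hXY
  obtain ⟨j, hj⟩ := hrmax
  have hlt := Nat.nth_strictMono hinf (by omega : j < j + 1)
  obtain ⟨hm2, hdm⟩ := (hD₀ _).1 (Nat.nth_mem_of_infinite hinf j)
  refine ⟨hM.ideallyConstrained hgen hXY hEF (by omega) fun e i he2 hde hei => ?_,
    hM.not_ideallyConstrained hgen hXY hEF hm2 hdm fun t ht => ?_⟩
  · obtain ⟨n, hn, hin, hni⟩ :=
      Nat.exists_mem_Ico_of_nth_sub_le hinf hrub ((hD₀ e).2 ⟨he2, hde⟩) hei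
    exact ⟨n, ((hD₀ n).1 hn).1, ((hD₀ n).1 hn).2, hin, hni⟩
  · have hnot : ¬ D₀ (Nat.nth D₀ j + 1 + t) :=
      Nat.not_of_nth_lt_of_lt_nth hinf (j := j) (by omega) (by omega)
    rw [hD₀] at hnot
    have := hM.dSeq_le_one (F := F) hgen hXY (k := Nat.nth D₀ j + 1 + t) (by omega)
    omega

/-- assume `[E : F] = 2`, the sequence `(d_i)_{i ≥ 2}` is not constant,
`D₀ = {i ≥ 2 : d_i = 0}` is infinite, and the consecutive differences of the elements of
`D₀` are bounded with maximum `r`.  Then `L` is ideally `r`-constrained but not ideally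
`(r - 1)`-constrained. -/
theorem stmt_13 (E : Type*) [Field E] (M : Type*) [LieRing M] [LieAlgebra E M]
    (Mc : ℕ → Submodule E M) (hM : IsMaximalClass E M Mc)
    (F : Type*) [Field F] [Algebra F E] [LieAlgebra F M] [IsScalarTower F E M]
    (hEF : Module.finrank F E = 2)
    (X Y : M) (hX : X ∈ Mc 1) (hY : Y ∈ Mc 1) (hXY : LinearIndependent E ![X, Y])
    (hnc : ∃ i j : ℕ, 2 ≤ i ∧ 2 ≤ j ∧ dSeq E Mc F X Y i ≠ dSeq E Mc F X Y j)
    (D₀ : ℕ → Prop) (hD₀ : ∀ i, D₀ i ↔ 2 ≤ i ∧ dSeq E Mc F X Y i = 0)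
    (hinf : (setOf D₀).Infinite)
    (r : ℕ) (hrub : ∀ j : ℕ, Nat.nth D₀ (j + 1) - Nat.nth D₀ j ≤ r)
    (hrmax : ∃ j : ℕ, Nat.nth D₀ (j + 1) - Nat.nth D₀ j = r) :
    IdeallyConstrained F X Y r ∧ ¬ IdeallyConstrained F X Y (r - 1) :=
  stmt_13_general E M Mc hM F hEF X Y hX hY hXY D₀ hD₀ hinf r hrub hrmax
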